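/- arXiv:2510.12155 — 5 statements merged into one kernel-verified Lean document; each statement's English description precedes it below -/
import Mathlib

section
/- If G is a finite simple graph such that every nonempty independent set I of G satisfies δ_G(I) ≥ |I| + 1, then G has a 2-factor. -/
variable {V : Type*}

/-- The degree of `v` in `H` (number of neighbors). -/
noncomputable def degN (H : SimpleGraph V) (v : V) : ℕ := Nat.card (H.neighborSet v)

/-- `I` is an independent set of `G`. -/
def IndepSet (G : SimpleGraph V) (I : Set V) : Prop := I.Pairwise fun u v => ¬ G.Adj u v

/-- Minimum degree (in `G`) among the vertices of `I`. -/
noncomputable def minDegOn (G : SimpleGraph V) (I : Set V) : ℕ := sInf (degN G '' I)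

/-- Minimum degree of `G`. -/
noncomputable def minDeg (G : SimpleGraph V) : ℕ := sInf (Set.range (degN G))

/-- Independence number of `G`. -/
noncomputable def indNum (G : SimpleGraph V) : ℕ :=
  sSup {n : ℕ | ∃ I : Finset V, IndepSet G ↑I ∧ I.card = n}

/-- `f(G) = max { |I| - δ_G(I) + 1 : I nonempty independent }`. -/
noncomputable def fVal (G : SimpleGraph V) : ℤ :=
  sSup {z : ℤ | ∃ I : Finset V, I.Nonempty ∧ IndepSet G ↑I ∧
    z = (I.card : ℤ) - (minDegOn G ↑I : ℤ) + 1}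

/-- `H` is a pseudo 2-factor of `G`: a spanning subgraph each of whose components is
`K₁`, `K₂`, or a cycle; equivalently all degrees are at most `2` and the degree
function is constant on each component. -/
def IsPseudoTwoFactor (G H : SimpleGraph V) : Prop :=
  H ≤ G ∧ (∀ v, degN H v ≤ 2) ∧ ∀ u v, H.Adj u v → degN H u = degN H v

/-- The number of components of `H` that are not cycles, i.e. contain a vertex of
degree at most `1`. -/
noncomputable def nonCycleCount (H : SimpleGraph V) : ℕ :=
  Nat.card {c : H.ConnectedComponent // ∃ v, H.connectedComponentMk v = c ∧ degN H v ≤ 1}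

/-- `H` is a 2-factor of `G`: a 2-regular spanning subgraph. -/
def IsTwoFactor (G H : SimpleGraph V) : Prop := H ≤ G ∧ ∀ v, degN H v = 2

/-!
Encode vertex-disjoint cycles of length at least three in `G` as a permutation `σ` whose
nontrivial cycles follow edges of `G` and have no 2-cycles, the uncovered vertices being the fixed
points, and take such a `σ` whose set of fixed points is minimal. Minimality forbids every local
rerouting that would absorb a fixed point `u` (inserting it into an arc, closing a triangle, or
rejoining the cycles through two neighbours of `u`), and these prohibitions say that `σ` maps the
neighbourhood of a fixed vertex `a` onto an independent set of size `deg a`. If `a` has a fixed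
neighbour `c`, then `c` lies in that set and the hypothesis gives `deg a < deg c`, which cannot hold
in both directions. Otherwise `a` can be added to the set, and `δ(I) ≥ |I| + 1` fails at `a`.
Hence `σ` has no fixed points and its cycles form a 2-factor.
-/

namespace Equiv.Perm

variable {α : Type*}

theorem apply_eq_iff_of_apply_eq_self {σ : Perm α} {u z : α} (hu : σ u = u) : σ z = u ↔ z = u := by
  conv_lhs => rw [← hu]
  exact σ.apply_eq_iff_eq

open Classical in
noncomputable def reverseCycleOf (σ : Perm α) (a : α) : Perm α where
  toFun z := if σ.SameCycle a z then σ⁻¹ z else σ z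
  invFun z := if σ.SameCycle a z then σ z else σ⁻¹ z
  left_inv z := by by_cases h : σ.SameCycle a z <;> simp [h]
  right_inv z := by by_cases h : σ.SameCycle a z <;> simp [h]

theorem reverseCycleOf_apply_of_sameCycle {σ : Perm α} {a z : α} (h : σ.SameCycle a z) :
    σ.reverseCycleOf a z = σ⁻¹ z := by
  classical
  exact if_pos h

theorem reverseCycleOf_apply_of_not_sameCycle {σ : Perm α} {a z : α} (h : ¬σ.SameCycle a z) :
    σ.reverseCycleOf a z = σ z := by
  classical
  exact if_neg h

theorem reverseCycleOf_apply_eq_self {σ : Perm α} {a z : α} :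
    σ.reverseCycleOf a z = z ↔ σ z = z := by
  by_cases h : σ.SameCycle a z
  · rw [reverseCycleOf_apply_of_sameCycle h, inv_eq_iff_eq, eq_comm]
  · rw [reverseCycleOf_apply_of_not_sameCycle h]

theorem not_sameCycle_mul_swap [Finite α] [DecidableEq α] {σ : Perm α} {x y : α} (hxy : x ≠ y)
    (h : σ.SameCycle x y) : ¬(σ * swap x y).SameCycle x y := by
  have hex : ∃ k, 0 < k ∧ (σ ^ k) y = x := h.symm.exists_pow_eq''.imp fun _ h => ⟨h.1, h.2.2⟩
  classical
  obtain ⟨k, ⟨hk, hkx⟩, hmin⟩ : ∃ k, (0 < k ∧ (σ ^ k) y = x) ∧ ∀ j < k, ¬(0 < j ∧ (σ ^ j) y = x) :=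
    ⟨_, Nat.find_spec hex, fun _ => Nat.find_min hex⟩
  have hne : ∀ j, 0 < j → j < k → (σ ^ j) y ≠ x ∧ (σ ^ j) y ≠ y := by
    refine fun j hj hjk =>
      ⟨fun h => hmin j hjk ⟨hj, h⟩, fun h => hmin (k - j) (by omega) ⟨by omega, ?_⟩⟩
    calc (σ ^ (k - j)) y = (σ ^ (k - j)) ((σ ^ j) y) := by rw [h]
      _ = x := by rw [← mul_apply, ← pow_add, Nat.sub_add_cancel hjk.le, hkx]
  -- the arc `σ y, σ² y, …, σᵏ y = x` is invariant under `σ * swap x y` and avoids `y`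
  set A := {z | ∃ j, 0 < j ∧ j ≤ k ∧ (σ ^ j) y = z}
  have hA : Set.MapsTo (σ * swap x y) A A := by
    rintro _ ⟨j, hj, hjk, rfl⟩
    rcases hjk.lt_or_eq with hjk | rfl
    · obtain ⟨h1, h2⟩ := hne j hj hjk
      exact ⟨j + 1, j.succ_pos, hjk,
        by rw [mul_apply, swap_apply_of_ne_of_ne h1 h2, pow_succ', mul_apply]⟩
    · exact ⟨1, one_pos, hk, by rw [hkx, mul_apply, swap_apply_left, pow_one]⟩
  have hyA : y ∉ A := by
    rintro ⟨j, hj, hjk, hjy⟩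
    rcases hjk.lt_or_eq with hjk | rfl
    · exact (hne j hj hjk).2 hjy
    · exact hxy (hkx.symm.trans hjy)
  rintro hsc
  obtain ⟨n, -, hn⟩ := hsc.exists_pow_eq'
  refine hyA (hn ▸ ?_)
  rw [coe_pow]
  exact hA.iterate n ⟨k, hk, le_rfl, hkx⟩

end Equiv.Perm

namespace SimpleGraph

open Equiv Equiv.Perm Function

variable (G : SimpleGraph V)

def IsPartialCycleCover (σ : Perm V) : Prop := ∀ v, σ v ≠ v → G.Adj v (σ v) ∧ σ (σ v) ≠ v

/-- A partial cycle cover up to the arcs leaving `s`, which a rerouting is about to replace. -/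
def IsPartialCycleCoverOff (σ : Perm V) (s : Set V) : Prop :=
  ∀ v ∉ s, σ v ≠ v → G.Adj v (σ v) ∧ (σ v ∉ s → σ (σ v) ≠ v)

def HasCoverFixingFewer (σ : Perm V) : Prop :=
  ∃ σ', G.IsPartialCycleCover σ' ∧ fixedPoints σ' ⊂ fixedPoints σ

variable {G}

theorem isPartialCycleCover_one : G.IsPartialCycleCover 1 := fun _ hv => absurd rfl hv

theorem exists_isPartialCycleCover_not_hasCoverFixingFewer [Finite V] :
    ∃ σ, G.IsPartialCycleCover σ ∧ ¬G.HasCoverFixingFewer σ := by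
  obtain ⟨σ, hσ, hmin⟩ := (measure fun σ : Perm V => (fixedPoints σ).ncard).wf.has_min
    {σ | G.IsPartialCycleCover σ} ⟨1, isPartialCycleCover_one⟩
  exact ⟨σ, hσ, fun ⟨σ', hσ', hlt⟩ => hmin σ' hσ' (Set.ncard_lt_ncard hlt (Set.toFinite _))⟩

theorem IsPartialCycleCover.isTwoFactor_fromRel {σ : Perm V} (hσ : G.IsPartialCycleCover σ)
    (hfree : ∀ v, σ v ≠ v) : IsTwoFactor G (fromRel fun a b => σ a = b) := by
  refine ⟨fun a b ⟨_, hab⟩ => ?_, fun v => ?_⟩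
  · rcases hab with rfl | rfl
    · exact (hσ a (hfree a)).1
    · exact (hσ b (hfree b)).1.symm
  have hnbr : (fromRel fun a b => σ a = b).neighborSet v = {σ v, σ⁻¹ v} := by
    ext w
    simp only [mem_neighborSet, fromRel_adj, Set.mem_insert_iff, Set.mem_singleton_iff,
      eq_inv_iff_eq]
    constructor
    · rintro ⟨-, h | h⟩
      exacts [Or.inl h.symm, Or.inr h]
    · rintro (rfl | h)
      · exact ⟨(hfree v).symm, Or.inl rfl⟩
      · exact ⟨by rintro rfl; exact hfree v h, Or.inr h⟩
  rw [degN, hnbr, Nat.card_coe_set_eq, Set.ncard_pair]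
  exact fun h => (hσ v (hfree v)).2 (eq_inv_iff_eq.1 h)

theorem IsPartialCycleCover.isPartialCycleCoverOff {σ : Perm V} (hσ : G.IsPartialCycleCover σ)
    (s : Set V) : G.IsPartialCycleCoverOff σ s := fun v _ hv => ⟨(hσ v hv).1, fun _ => (hσ v hv).2⟩

theorem hasCoverFixingFewer_of {σ σ' : Perm V} (hσ' : G.IsPartialCycleCover σ')
    (hfix : ∀ z, σ' z = z → σ z = z) {u : V} (hu : σ u = u) (hu' : σ' u ≠ u) :
    G.HasCoverFixingFewer σ :=
  ⟨σ', hσ', (Set.ssubset_iff_of_subset hfix).2 ⟨u, hu, hu'⟩⟩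

theorem IsPartialCycleCover.hasCoverFixingFewer_of_adj_of_adj_apply {σ : Perm V}
    (hσ : G.IsPartialCycleCover σ) {u w : V} (hu : σ u = u) (hw : σ w ≠ w)
    (huw : G.Adj u w) (huw' : G.Adj u (σ w)) : G.HasCoverFixingFewer σ := by
  classical
  have hne_u : ∀ {z}, z ≠ u → σ z ≠ u := (apply_eq_iff_of_apply_eq_self hu).not.2
  set σ' := swap u (σ w) * σ
  have e_w : σ' w = u := by simp [σ']
  have e_u : σ' u = σ w := by simp [σ', hu]
  have e_of_ne : ∀ {z}, z ≠ u → z ≠ w → σ' z = σ z := fun hzu hzw =>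
    swap_apply_of_ne_of_ne (hne_u hzu) (σ.injective.ne hzw)
  have hwu : w ≠ u := huw.ne.symm
  refine hasCoverFixingFewer_of (σ' := σ') (fun v hv => ?_) (fun z hz => ?_) hu
    (by rw [e_u]; exact hne_u hwu)
  · by_cases hvw : v = w
    · subst hvw
      rw [e_w, e_u]
      exact ⟨huw.symm, hw⟩
    by_cases hvu : v = u
    · subst hvu
      rw [e_u, e_of_ne (hne_u hwu) hw]
      exact ⟨huw', hne_u (hne_u hwu)⟩
    rw [e_of_ne hvu hvw] at hv ⊢
    refine ⟨(hσ v hv).1, ?_⟩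
    by_cases h : σ v = w
    · rw [h, e_w]
      exact Ne.symm hvu
    · rw [e_of_ne (hne_u hvu) h]
      exact (hσ v hv).2
  · by_cases hzw : z = w
    · exact absurd (e_w ▸ hzw ▸ hz) (Ne.symm hwu)
    by_cases hzu : z = u
    · exact hzu ▸ hu
    rwa [e_of_ne hzu hzw] at hz

theorem IsPartialCycleCover.isPartialCycleCoverOff_mul_swap [DecidableEq V] {σ : Perm V}
    (hσ : G.IsPartialCycleCover σ) (x y : V) : G.IsPartialCycleCoverOff (σ * swap x y) {x, y} := by
  have e_of_ne : ∀ {z}, z ∉ ({x, y} : Set V) → (σ * swap x y) z = σ z := fun hz => by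
    simp only [Set.mem_insert_iff, Set.mem_singleton_iff, not_or] at hz
    rw [mul_apply, swap_apply_of_ne_of_ne hz.1 hz.2]
  intro v hv hτv
  rw [e_of_ne hv] at hτv ⊢
  exact ⟨(hσ v hτv).1, fun h => e_of_ne h ▸ (hσ v hτv).2⟩

variable {τ : Perm V} {u x y : V}

theorem IsPartialCycleCoverOff.reverseCycleOf (hτ : G.IsPartialCycleCoverOff τ {x, y})
    (hxy : ¬τ.SameCycle x y) : G.IsPartialCycleCoverOff (τ.reverseCycleOf y) {x, τ y} := by
  intro v hv hμv
  simp only [Set.mem_insert_iff, Set.mem_singleton_iff, not_or] at hv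
  by_cases hC : τ.SameCycle y v
  · rw [reverseCycleOf_apply_of_sameCycle hC] at hμv ⊢
    set w := τ⁻¹ v
    have hwv : τ w = v := τ.apply_symm_apply v
    have hwC : τ.SameCycle y w := sameCycle_symm_apply_right.2 hC
    have hw : w ∉ ({x, y} : Set V) := by
      simp only [Set.mem_insert_iff, Set.mem_singleton_iff, not_or]
      exact ⟨fun h => hxy (h ▸ hwC).symm, fun h => hv.2 (h ▸ hwv).symm⟩
    obtain ⟨hadj, hcyc⟩ := hτ w hw (hwv ▸ Ne.symm hμv)
    refine ⟨hwv ▸ hadj.symm, fun hμw h => ?_⟩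
    rw [reverseCycleOf_apply_of_sameCycle hwC, inv_eq_iff_eq] at h
    simp only [Set.mem_insert_iff, Set.mem_singleton_iff, not_or] at hμw
    have hvy : v ≠ y := fun hvy => hμw.2 (by rw [h, hvy])
    refine hcyc ?_ (by rw [hwv, ← h])
    simp only [Set.mem_insert_iff, Set.mem_singleton_iff, not_or]
    exact ⟨hwv ▸ hv.1, hwv ▸ hvy⟩
  · rw [reverseCycleOf_apply_of_not_sameCycle hC] at hμv ⊢
    have hvy : v ≠ y := fun h => hC (h ▸ SameCycle.refl τ y)
    obtain ⟨hadj, hcyc⟩ := hτ v (by simp [hv.1, hvy]) hμv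
    refine ⟨hadj, fun h => ?_⟩
    have hC' : ¬τ.SameCycle y (τ v) := sameCycle_apply_right.not.2 hC
    rw [reverseCycleOf_apply_of_not_sameCycle hC']
    simp only [Set.mem_insert_iff, Set.mem_singleton_iff, not_or] at h
    have hτvy : τ v ≠ y := fun h' => hC' (h' ▸ SameCycle.refl τ y)
    exact hcyc (by simp [h.1, hτvy])

open Classical in
/-- Splices `u` into the cycles of `x` and `y` as `x ↦ u ↦ y` and `τ y ↦ τ x`, traversing the
cycle of `y` backwards; for `x`, `y` on different cycles this joins them into one. -/
noncomputable def mergeVia (τ : Perm V) (u x y : V) : Perm V :=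
  swap u (τ x) * swap u y * τ.reverseCycleOf y

theorem mergeVia_apply_apply_right : mergeVia τ u x y (τ y) = τ x := by
  classical
  rw [mergeVia, mul_apply, reverseCycleOf_apply_of_sameCycle (sameCycle_apply_right.2 (.refl τ y)),
    inv_eq_iff_eq.2 rfl, mul_apply, swap_apply_right, swap_apply_left]

theorem mergeVia_apply_left (hxy : ¬τ.SameCycle x y) (hu : τ u = u) (hux : u ≠ x) :
    mergeVia τ u x y x = u := by
  classical
  have hτxy : τ x ≠ y := fun h => hxy (h ▸ sameCycle_apply_right.2 (.refl τ x))
  have hτxu : τ x ≠ u := (apply_eq_iff_of_apply_eq_self hu).not.2 hux.symm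
  rw [mergeVia, mul_apply, reverseCycleOf_apply_of_not_sameCycle (fun h => hxy h.symm), mul_apply,
    swap_apply_of_ne_of_ne hτxu hτxy, swap_apply_right]

theorem mergeVia_apply_self (hxy : ¬τ.SameCycle x y) (hu : τ u = u) (huy : u ≠ y) :
    mergeVia τ u x y u = y := by
  classical
  have hyτx : y ≠ τ x := fun h => hxy (by rw [h]; exact sameCycle_apply_right.2 (.refl τ x))
  rw [mergeVia, mul_apply,
    reverseCycleOf_apply_of_not_sameCycle (fun h => huy (h.eq_of_right hu).symm),
    hu, mul_apply, swap_apply_left, swap_apply_of_ne_of_ne huy.symm hyτx]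

theorem mergeVia_apply_of_ne (hxy : ¬τ.SameCycle x y) (hu : τ u = u) (huy : u ≠ y) {z : V}
    (hzx : z ≠ x) (hzu : z ≠ u) (hzy : z ≠ τ y) :
    mergeVia τ u x y z = τ.reverseCycleOf y z := by
  classical
  have hμ : ∀ {a b}, τ.reverseCycleOf y a = b → z ≠ a → τ.reverseCycleOf y z ≠ b :=
    fun hab hza h => hza ((τ.reverseCycleOf y).injective (h.trans hab.symm))
  have hμx : τ.reverseCycleOf y x = τ x :=
    reverseCycleOf_apply_of_not_sameCycle (fun h => hxy h.symm)
  have hμu : τ.reverseCycleOf y u = u := by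
    rw [reverseCycleOf_apply_of_not_sameCycle (fun h => huy (h.eq_of_right hu).symm), hu]
  have hμy : τ.reverseCycleOf y (τ y) = y := by
    rw [reverseCycleOf_apply_of_sameCycle (sameCycle_apply_right.2 (.refl τ y)),
      inv_eq_iff_eq.2 rfl]
  rw [mergeVia, mul_apply, mul_apply, swap_apply_of_ne_of_ne (hμ hμu hzu) (hμ hμy hzy),
    swap_apply_of_ne_of_ne (hμ hμu hzu) (hμ hμx hzx)]

theorem mergeVia_apply_apply_left_ne (hxy : ¬τ.SameCycle x y) (hu : τ u = u) (hux : u ≠ x)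
    (huy : u ≠ y) : mergeVia τ u x y (τ x) ≠ τ y := by
  have hτxy : τ x ≠ y := fun h => hxy (h ▸ sameCycle_apply_right.2 (.refl τ x))
  by_cases hx : τ x = x
  · rw [hx, mergeVia_apply_left hxy hu hux]
    exact fun h => huy (τ.injective (hu.trans h))
  rw [mergeVia_apply_of_ne hxy hu huy hx ((apply_eq_iff_of_apply_eq_self hu).not.2 hux.symm)
    (τ.injective.ne fun h => hxy (h ▸ .refl τ x)),
    reverseCycleOf_apply_of_not_sameCycle (sameCycle_apply_right.not.2 fun h => hxy h.symm)]
  exact τ.injective.ne hτxy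

theorem isPartialCycleCover_mergeVia (hτ : G.IsPartialCycleCoverOff τ {x, y})
    (hxy : ¬τ.SameCycle x y) (hu : τ u = u) (hux : G.Adj u x) (huy : G.Adj u y)
    (hadj : G.Adj (τ x) (τ y)) : G.IsPartialCycleCover (mergeVia τ u x y) := by
  have e_x := mergeVia_apply_left hxy hu hux.ne
  have e_u := mergeVia_apply_self hxy hu huy.ne
  have e_y : mergeVia τ u x y (τ y) = τ x := mergeVia_apply_apply_right
  intro v hv
  by_cases hvx : v = x
  · subst hvx
    rw [e_x, e_u]
    exact ⟨hux.symm, fun h => hxy (h ▸ .refl τ y)⟩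
  by_cases hvu : v = u
  · subst hvu
    rw [e_u]
    exact ⟨huy, fun h => hxy ((mergeVia τ v x y).injective (e_x.trans h.symm) ▸ .refl τ x)⟩
  by_cases hvy : v = τ y
  · subst hvy
    rw [e_y]
    exact ⟨hadj.symm, mergeVia_apply_apply_left_ne hxy hu hux.ne huy.ne⟩
  rw [mergeVia_apply_of_ne hxy hu huy.ne hvx hvu hvy] at hv ⊢
  obtain ⟨hadj', hcyc⟩ := hτ.reverseCycleOf hxy v (by simp [hvx, hvy]) hv
  refine ⟨hadj', fun h => ?_⟩
  set μ := τ.reverseCycleOf y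
  by_cases h1 : μ v = x
  · rw [h1, e_x] at h
    exact hvu h.symm
  have h2 : μ v ≠ u := fun h2 =>
    hvu (μ.injective (h2.trans (reverseCycleOf_apply_eq_self.2 hu).symm))
  by_cases h3 : μ v = τ y
  · rw [h3, e_y] at h
    rw [← h, reverseCycleOf_apply_of_not_sameCycle
      (sameCycle_apply_right.not.2 fun h => hxy h.symm)] at h3
    exact hxy (τ.injective h3 ▸ sameCycle_apply_right.2 (.refl τ x))
  rw [mergeVia_apply_of_ne hxy hu huy.ne h1 h2 h3] at h
  exact hcyc (by simp [h1, h3]) h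

theorem mergeVia_apply_eq_self (hxy : ¬τ.SameCycle x y) (hu : τ u = u) (hux : u ≠ x)
    (huy : u ≠ y) {z : V} (hz : mergeVia τ u x y z = z) : τ z = z := by
  by_cases hzx : z = x
  · rw [hzx, mergeVia_apply_left hxy hu hux] at hz
    exact absurd hz hux
  by_cases hzu : z = u
  · exact hzu ▸ hu
  by_cases hzy : z = τ y
  · rw [hzy, mergeVia_apply_apply_right] at hz
    exact absurd (τ.injective hz ▸ .refl τ x) hxy
  rwa [mergeVia_apply_of_ne hxy hu huy hzx hzu hzy, reverseCycleOf_apply_eq_self] at hz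

section

variable [Finite V]

theorem IsPartialCycleCover.hasCoverFixingFewer_of_adj_apply_apply {σ : Perm V}
    (hσ : G.IsPartialCycleCover σ) {u x y : V} (hu : σ u = u) (hux : G.Adj u x)
    (huy : G.Adj u y) (hxy : x ≠ y) (hxσy : x ≠ σ y) (hyσx : y ≠ σ x)
    (hadj : G.Adj (σ x) (σ y)) : G.HasCoverFixingFewer σ := by
  classical
  by_cases hsc : σ.SameCycle x y
  · -- `swap x y` cuts the common cycle into one through `x` and one through `y`, which
    -- `mergeVia` then rejoins through `u`
    set τ := σ * swap x y
    have hτx : τ x = σ y := by simp [τ]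
    have hτy : τ y = σ x := by simp [τ]
    have hτ_of_ne : ∀ {z}, z ≠ x → z ≠ y → τ z = σ z := fun h1 h2 => by
      simp [τ, swap_apply_of_ne_of_ne h1 h2]
    have hτu : τ u = u := (hτ_of_ne hux.ne huy.ne).trans hu
    have hτxy : ¬τ.SameCycle x y := not_sameCycle_mul_swap hxy hsc
    have hmerge := isPartialCycleCover_mergeVia (hσ.isPartialCycleCoverOff_mul_swap x y) hτxy
      hτu hux huy (hτx ▸ hτy ▸ hadj.symm)
    refine hasCoverFixingFewer_of hmerge (fun z hz => ?_) hu
      (by rw [mergeVia_apply_self hτxy hτu huy.ne]; exact huy.ne.symm)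
    have hτz := mergeVia_apply_eq_self hτxy hτu hux.ne huy.ne hz
    by_cases hzx : z = x
    · rw [hzx, hτx] at hτz
      exact absurd hτz.symm hxσy
    by_cases hzy : z = y
    · rw [hzy, hτy] at hτz
      exact absurd hτz.symm hyσx
    rwa [hτ_of_ne hzx hzy] at hτz
  · have hmerge := isPartialCycleCover_mergeVia (hσ.isPartialCycleCoverOff _) hsc hu hux huy hadj
    exact hasCoverFixingFewer_of hmerge (fun _ => mergeVia_apply_eq_self hsc hu hux.ne huy.ne) hu
      (by rw [mergeVia_apply_self hsc hu huy.ne]; exact huy.ne.symm)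

theorem IsPartialCycleCover.indepSet_image_neighborSet {σ : Perm V}
    (hσ : G.IsPartialCycleCover σ) (hmin : ¬G.HasCoverFixingFewer σ) {a : V} (ha : σ a = a) :
    IndepSet G (σ '' G.neighborSet a) := by
  have hsucc : ∀ {w w'}, G.Adj a w → G.Adj a w' → w ≠ w' → w' ≠ σ w := fun haw haw' hne h =>
    hmin (hσ.hasCoverFixingFewer_of_adj_of_adj_apply ha (fun hw => hne (h.trans hw).symm) haw
      (h ▸ haw'))
  rintro _ ⟨w, hw, rfl⟩ _ ⟨w', hw', rfl⟩ hne hadj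
  have hww' : w ≠ w' := fun h => hne (h ▸ rfl)
  exact hmin (hσ.hasCoverFixingFewer_of_adj_apply_apply ha hw hw' hww' (hsucc hw' hw hww'.symm)
    (hsucc hw hw' hww') hadj)

theorem IsPartialCycleCover.indepSet_insert_image_neighborSet {σ : Perm V}
    (hσ : G.IsPartialCycleCover σ) (hmin : ¬G.HasCoverFixingFewer σ) {u : V} (hu : σ u = u)
    (hnf : ∀ w, G.Adj u w → σ w ≠ w) : IndepSet G (insert u (σ '' G.neighborSet u)) := by
  refine Set.pairwise_insert.2 ⟨hσ.indepSet_image_neighborSet hmin hu, ?_⟩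
  rintro _ ⟨w, hw, rfl⟩ -
  have hnadj : ¬G.Adj u (σ w) := fun hadj =>
    hmin (hσ.hasCoverFixingFewer_of_adj_of_adj_apply hu (hnf w hw) hw hadj)
  exact ⟨hnadj, fun hadj => hnadj hadj.symm⟩

theorem ncard_add_one_le_degN
    (h : ∀ I : Finset V, I.Nonempty → IndepSet G ↑I → I.card + 1 ≤ minDegOn G ↑I)
    ⦃I : Set V⦄ (hI : IndepSet G I) (c : V) (hc : c ∈ I) : I.ncard + 1 ≤ degN G c := by
  have hfin := I.toFinite
  calc I.ncard + 1 = hfin.toFinset.card + 1 := by rw [Set.ncard_eq_toFinset_card I hfin]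
    _ ≤ minDegOn G I := by simpa using h hfin.toFinset ⟨c, by simpa⟩ (by simpa)
    _ ≤ degN G c := Nat.sInf_le ⟨c, hc, rfl⟩

theorem IsPartialCycleCover.degN_lt_degN_of_adj
    (hdeg : ∀ ⦃I : Set V⦄, IndepSet G I → ∀ c ∈ I, I.ncard + 1 ≤ degN G c)
    {σ : Perm V} (hσ : G.IsPartialCycleCover σ) (hmin : ¬G.HasCoverFixingFewer σ) {a c : V}
    (ha : σ a = a) (hc : σ c = c) (hac : G.Adj a c) : degN G a < degN G c := by
  have := hdeg (hσ.indepSet_image_neighborSet hmin ha) c ⟨c, hac, hc⟩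
  rwa [Set.ncard_image_of_injective _ σ.injective] at this

theorem IsPartialCycleCover.exists_adj_apply_eq_self
    (hdeg : ∀ ⦃I : Set V⦄, IndepSet G I → ∀ c ∈ I, I.ncard + 1 ≤ degN G c)
    {σ : Perm V} (hσ : G.IsPartialCycleCover σ) (hmin : ¬G.HasCoverFixingFewer σ) {u : V}
    (hu : σ u = u) : ∃ c, G.Adj u c ∧ σ c = c := by
  by_contra! hnf
  have hu' : u ∉ σ '' G.neighborSet u := fun ⟨w, hw, hwu⟩ =>
    G.irrefl ((apply_eq_iff_of_apply_eq_self hu).1 hwu ▸ hw)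
  have := hdeg (hσ.indepSet_insert_image_neighborSet hmin hu hnf) u (Set.mem_insert u _)
  rw [Set.ncard_insert_of_notMem hu', Set.ncard_image_of_injective _ σ.injective] at this
  exact absurd this (by simp [degN])

end

end SimpleGraph

/-- If every nonempty independent set `I` of `G` satisfies `δ_G(I) ≥ |I| + 1`,
then `G` has a 2-factor. -/
theorem two_factor_of_indep_minDeg {V : Type*} [Fintype V] (G : SimpleGraph V)
    (h : ∀ I : Finset V, I.Nonempty → IndepSet G ↑I → I.card + 1 ≤ minDegOn G ↑I) :
    ∃ H : SimpleGraph V, IsTwoFactor G H := by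
  have hdeg := G.ncard_add_one_le_degN h
  obtain ⟨σ, hσ, hmin⟩ := G.exists_isPartialCycleCover_not_hasCoverFixingFewer
  by_cases hfix : ∃ u, σ u = u
  · obtain ⟨u, hu⟩ := hfix
    obtain ⟨c, huc, hc⟩ := hσ.exists_adj_apply_eq_self hdeg hmin hu
    exact (lt_asymm (hσ.degN_lt_degN_of_adj hdeg hmin hu hc huc)
      (hσ.degN_lt_degN_of_adj hdeg hmin hc hu huc.symm)).elim
  · exact ⟨_, hσ.isTwoFactor_fromRel (not_exists.1 hfix)⟩
end

section
/- Every finite simple graph G with δ(G) ≥ α(G) + 1 has a 2-factor, where δ(G) is the minimum degree and α(G) is the independence number of G. -/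
variable {V : Type*}

/-!
Among the subgraphs `H ≤ G` whose components are cycles or isolated vertices, take one covering
as many vertices as possible, and suppose it misses a vertex `u`. Orient the cycles of `H` by a
permutation `σ` fixing the isolated vertices. The set `σ '' N_G(u)` has `δ(G) > α(G)` elements,
so two of them are adjacent in `G`. In each of the four ways this can happen there is a cycle of
`G` through `u` that alternates with `H` at the vertices `H` covers, and switching `H` along it
covers `u` as well, contradicting maximality.
-/

open scoped symmDiff

lemma degN_eq_ncard (H : SimpleGraph V) (v : V) : degN H v = (H.neighborSet v).ncard :=
  Nat.card_coe_set_eq _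

lemma minDeg_le_degN (G : SimpleGraph V) (v : V) : minDeg G ≤ degN G v :=
  Nat.sInf_le ⟨v, rfl⟩

lemma IndepSet.ncard_le_indNum [Finite V] {G : SimpleGraph V} {I : Set V} (hI : IndepSet G I) :
    I.ncard ≤ indNum G := by
  have := Fintype.ofFinite V
  refine le_csSup ⟨Fintype.card V, ?_⟩ ⟨(Set.toFinite I).toFinset, by simpa using hI, ?_⟩
  · rintro _ ⟨J, -, rfl⟩
    exact J.card_le_univ
  · rw [← Set.ncard_coe_finset, Set.Finite.coe_toFinset]

lemma Set.ncard_pair_symmDiff_pair {α : Type*} {a b c d : α} (hab : a ≠ b) (hcd : c ≠ d)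
    (h : (c = a ∨ c = b) ↔ ¬(d = a ∨ d = b)) : (({a, b} : Set α) ∆ {c, d}).ncard = 2 := by
  rw [Set.ncard_eq_two]
  simp only [Set.ext_iff, Set.mem_symmDiff, Set.mem_insert_iff, Set.mem_singleton_iff]
  by_cases hc : c = a ∨ c = b
  · rcases hc with rfl | rfl
    exacts [⟨b, d, by grind, by grind⟩, ⟨a, d, by grind, by grind⟩]
  · rcases h.not_left.1 hc with rfl | rfl
    exacts [⟨b, c, by grind, by grind⟩, ⟨a, c, by grind, by grind⟩]

lemma Equiv.Perm.exists_apply_eq_of_fiberwise {α ι : Type*} [Finite α] (f : α → ι)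
    (π : ι → Equiv.Perm α) (hπ : ∀ z, f (π (f z) z) = f z) :
    ∃ σ : Equiv.Perm α, ∀ z, σ z = π (f z) z := by
  have hinj : Function.Injective fun z => π (f z) z := by
    intro a b hab
    have hf : f a = f b := by rw [← hπ a, ← hπ b]; exact congrArg f hab
    simp only [hf] at hab
    exact (π (f b)).injective hab
  exact ⟨Equiv.ofBijective _ (Finite.injective_iff_bijective.1 hinj), fun _ => rfl⟩

namespace SimpleGraph

namespace Walk

variable {G : SimpleGraph V} {u v z : V}

lemma getElem_support_tail (p : G.Walk u v) {i : ℕ} (hi : i < p.support.tail.length) :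
    p.support.tail[i] = p.getVert (i + 1) := by
  rw [List.getElem_tail, support_getElem_eq_getVert]

variable [DecidableEq V] {p : G.Walk u u}

lemma IsCycle.adj_formPerm (hp : p.IsCycle) (hz : z ∈ p.support.tail) :
    G.Adj z (p.support.tail.formPerm z) := by
  obtain ⟨i, hi, rfl⟩ := List.getElem_of_mem hz
  have hlen : p.support.tail.length = p.length := by simp
  rw [List.formPerm_apply_getElem _ hp.support_nodup, getElem_support_tail, getElem_support_tail]
  rcases lt_or_ge (i + 1) p.length with h | h
  · rw [Nat.mod_eq_of_lt (hlen ▸ h)]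
    exact p.adj_getVert_succ h
  · have hi' : i + 1 = p.length := by omega
    rw [hlen, hi', Nat.mod_self, getVert_length]
    simpa using p.adj_getVert_succ (i := 0) (by omega)

lemma IsCycle.formPerm_formPerm_ne (hp : p.IsCycle) (hz : z ∈ p.support.tail) :
    p.support.tail.formPerm (p.support.tail.formPerm z) ≠ z := by
  obtain ⟨i, hi, rfl⟩ := List.getElem_of_mem hz
  have h3 : 3 ≤ p.support.tail.length := by simpa using hp.three_le_length
  rw [← Equiv.Perm.mul_apply, ← pow_two, List.formPerm_pow_apply_getElem _ hp.support_nodup,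
    Ne, hp.support_nodup.getElem_inj_iff]
  rcases lt_or_ge (i + 2) p.support.tail.length with h | h
  · rw [Nat.mod_eq_of_lt h]; omega
  · rw [Nat.mod_eq_sub_mod h, Nat.mod_eq_of_lt (by omega)]; omega

end Walk

def fromPerm (σ : Equiv.Perm V) : SimpleGraph V := fromRel (σ · = ·)

@[simp] lemma fromPerm_adj {σ : Equiv.Perm V} {v w : V} :
    (fromPerm σ).Adj v w ↔ v ≠ w ∧ (σ v = w ∨ σ w = v) := fromRel_adj _ _ _

@[simp] lemma mem_support_fromPerm {σ : Equiv.Perm V} {v : V} :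
    v ∈ (fromPerm σ).support ↔ σ v ≠ v := by
  rw [mem_support]
  constructor
  · rintro ⟨w, hvw, h | h⟩ hv
    · exact hvw (hv ▸ h)
    · exact hvw (σ.injective (h.trans hv.symm)).symm
  · exact fun h => ⟨σ v, h.symm, Or.inl rfl⟩

variable {G H : SimpleGraph V}

lemma IsCycles.exists_cyclic_list [Finite V] [DecidableEq V] (hH : H.IsCycles)
    (c : H.ConnectedComponent) :
    ∃ l : List V, (∀ z ∈ l, H.Adj z (l.formPerm z) ∧ l.formPerm (l.formPerm z) ≠ z) ∧
      ∀ z, z ∈ l ↔ z ∈ c.supp ∧ z ∈ H.support := by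
  by_cases hc : ∃ v ∈ c.supp, v ∈ H.support
  · obtain ⟨v, hvc, hv⟩ := hc
    obtain ⟨p, hp, hverts⟩ :=
      hH.exists_cycle_toSubgraph_verts_eq_connectedComponentSupp hvc hv
    refine ⟨p.support.tail, fun z hz => ⟨hp.adj_formPerm hz, hp.formPerm_formPerm_ne hz⟩,
      fun z => ?_⟩
    have htail : z ∈ p.support.tail ↔ z ∈ p.support := by
      rw [p.mem_support_iff, or_iff_right_of_imp]
      rintro rfl
      exact Walk.end_mem_tail_support hp.not_nil
    have hsupp : z ∈ p.support.tail ↔ z ∈ c.supp := by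
      rw [htail, ← Walk.mem_verts_toSubgraph, hverts]
    rw [← hsupp, iff_self_and]
    exact fun hz => (hp.adj_formPerm hz).mem_support_left
  · refine ⟨[], by simp, fun z => ?_⟩
    simp only [List.not_mem_nil, false_iff, not_and]
    exact fun hz hz' => hc ⟨z, hz, hz'⟩

theorem IsCycles.exists_fromPerm_eq [Finite V] (hH : H.IsCycles) :
    ∃ σ : Equiv.Perm V, fromPerm σ = H := by
  classical
  choose L hadj hmem using hH.exists_cyclic_list
  set comp := H.connectedComponentMk
  have hcomp : ∀ z, comp ((L (comp z)).formPerm z) = comp z := by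
    intro z
    by_cases hz : z ∈ L (comp z)
    · exact ((hmem _ _).1 (List.formPerm_apply_mem_of_mem hz)).1
    · rw [List.formPerm_apply_of_notMem hz]
  obtain ⟨σ, hσ⟩ :=
    Equiv.Perm.exists_apply_eq_of_fiberwise comp (fun c => (L c).formPerm) hcomp
  refine ⟨σ, ?_⟩
  ext a b
  simp only [fromPerm_adj, hσ]
  constructor
  · have hmoved : ∀ z, (L (comp z)).formPerm z ≠ z → H.Adj z ((L (comp z)).formPerm z) :=
      fun z hz => (hadj _ z (List.mem_of_formPerm_apply_ne hz)).1
    rintro ⟨hab, rfl | rfl⟩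
    · exact hmoved a (Ne.symm hab)
    · exact (hmoved b hab).symm
  · intro h
    refine ⟨h.ne, ?_⟩
    set π := (L (comp a)).formPerm
    have ha : a ∈ L (comp a) :=
      (hmem _ a).2 ⟨ConnectedComponent.connectedComponentMk_mem, h.mem_support_left⟩
    have ha' : π⁻¹ a ∈ L (comp a) := by
      rwa [← List.formPerm_mem_iff_mem, ← Equiv.Perm.mul_apply, mul_inv_cancel,
        Equiv.Perm.one_apply]
    have hpred : H.Adj (π⁻¹ a) a ∧ π a ≠ π⁻¹ a := by simpa [π] using hadj _ _ ha'
    by_cases hb : π a = b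
    · exact Or.inl hb
    obtain ⟨w, -, huniq⟩ := hH.existsUnique_ne_adj (hadj _ a ha).1
    have hb' : b = π⁻¹ a :=
      (huniq b ⟨hb, h⟩).trans (huniq _ ⟨hpred.2, hpred.1.symm⟩).symm
    have hc : comp b = comp a := hb' ▸ ((hmem _ _).1 ha').1
    right
    rw [hc, hb']
    exact π.apply_symm_apply a

lemma neighborSet_symmDiff (H C : SimpleGraph V) (v : V) :
    (H ∆ C).neighborSet v = H.neighborSet v ∆ C.neighborSet v := by
  ext w
  simp [symmDiff_def]

theorem IsCycles.ncard_neighborSet_symmDiff {C : SimpleGraph V} (hH : H.IsCycles)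
    (hC : C.IsCycles)
    (halt : ∀ v ∈ H.support, ∀ w w', w ≠ w' → C.Adj v w → C.Adj v w' →
      (H.Adj v w ↔ ¬H.Adj v w'))
    {v : V} (hv : v ∈ H.support ∪ C.support) : ((H ∆ C).neighborSet v).ncard = 2 := by
  rw [neighborSet_symmDiff]
  rcases em' (v ∈ C.support) with hvC | hvC
  · rw [((notMem_support_iff_isIsolated C).1 hvC).neighborSet_eq_empty, ← Set.bot_eq_empty,
      symmDiff_bot]
    exact hH (hv.resolve_right hvC)
  obtain ⟨w, w', hww', hNC⟩ := Set.ncard_eq_two.1 (hC hvC)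
  rcases em' (v ∈ H.support) with hvH | hvH
  · rw [((notMem_support_iff_isIsolated H).1 hvH).neighborSet_eq_empty, ← Set.bot_eq_empty,
      bot_symmDiff, hNC, Set.ncard_pair hww']
  obtain ⟨a, b, hab, hNH⟩ := Set.ncard_eq_two.1 (hH hvH)
  have hw : C.Adj v w := show w ∈ C.neighborSet v by simp [hNC]
  have hw' : C.Adj v w' := show w' ∈ C.neighborSet v by simp [hNC]
  have halt' := halt v hvH w w' hww' hw hw'
  simp only [← mem_neighborSet, hNH, Set.mem_insert_iff, Set.mem_singleton_iff] at halt'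
  rw [hNH, hNC]
  exact Set.ncard_pair_symmDiff_pair hab hww' halt'

def Walk.IsAlternatingCycle (H : SimpleGraph V) {u : V} (c : G.Walk u u) : Prop :=
  c.IsCycle ∧ ∀ v ∈ H.support, ∀ w w', w ≠ w' → c.toSubgraph.Adj v w →
    c.toSubgraph.Adj v w' → (H.Adj v w ↔ ¬H.Adj v w')

theorem exists_isCycles_insert_support_subset (hHG : H ≤ G) (hH : H.IsCycles) {u : V}
    {c : G.Walk u u} (hc : c.IsAlternatingCycle H) :
    ∃ H' ≤ G, H'.IsCycles ∧ insert u H.support ⊆ H'.support := by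
  set C := c.toSubgraph.spanningCoe
  have hcard : ∀ v ∈ H.support ∪ C.support, ((H ∆ C).neighborSet v).ncard = 2 :=
    fun v => hH.ncard_neighborSet_symmDiff hc.1.isCycles_spanningCoe_toSubgraph hc.2
  have hsupp : H.support ∪ C.support ⊆ (H ∆ C).support := fun v hv =>
    Set.nonempty_of_ncard_ne_zero (s := (H ∆ C).neighborSet v) (by rw [hcard v hv]; omega)
  refine ⟨H ∆ C, symmDiff_le (le_sup_of_le_right hHG)
    (le_sup_of_le_right c.toSubgraph.spanningCoe_le), fun v ⟨w, hw⟩ => hcard v ?_, ?_⟩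
  · rw [neighborSet_symmDiff] at hw
    rcases hw with ⟨hw, -⟩ | ⟨hw, -⟩
    exacts [Or.inl ⟨w, hw⟩, Or.inr ⟨w, hw⟩]
  · refine Set.insert_subset (hsupp (Or.inr ⟨_, c.toSubgraph_adj_snd hc.1.not_nil⟩)) ?_
    exact Set.subset_union_left.trans hsupp

section AlternatingCycles

variable {σ : Equiv.Perm V} {u : V}

lemma adj_apply_of_fromPerm_le (hσG : fromPerm σ ≤ G) {x : V} (hx : σ x ≠ x) :
    G.Adj x (σ x) :=
  hσG (fromPerm_adj.2 ⟨hx.symm, Or.inl rfl⟩)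

lemma exists_isAlternatingCycle_of_fixed_triangle (hu : σ u = u) {r r' : V} (hr : σ r = r)
    (hr' : σ r' = r') (hur : G.Adj u r) (hur' : G.Adj u r') (hrr' : G.Adj r r') :
    ∃ c : G.Walk u u, c.IsAlternatingCycle (fromPerm σ) := by
  refine ⟨.cons hur (.cons hrr' (.cons hur'.symm .nil)), ?_, ?_⟩
  · simp only [Walk.cons_isCycle_iff, Walk.cons_isPath_iff, Walk.isPath_iff_nil,
      Walk.support_cons, Walk.support_nil, Walk.edges_cons, Walk.edges_nil, List.mem_cons,
      List.not_mem_nil, Sym2.eq_iff]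
    grind [σ.injective, Adj.ne]
  · intro v hv w w' hww' hw hw'
    simp only [mem_support_fromPerm, fromPerm_adj, Walk.toSubgraph, Subgraph.sup_adj,
      subgraphOfAdj_adj, singletonSubgraph_adj, Pi.bot_apply, Prop.bot_eq_false, or_false,
      Sym2.eq_iff] at hv hw hw' ⊢
    grind [σ.injective, Adj.ne]

lemma exists_isAlternatingCycle_of_adj_apply (hσG : fromPerm σ ≤ G) (hu : σ u = u) {x : V}
    (hx : σ x ≠ x) (hux : G.Adj u x) (hux' : G.Adj u (σ x)) :
    ∃ c : G.Walk u u, c.IsAlternatingCycle (fromPerm σ) := by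
  refine ⟨.cons hux (.cons (adj_apply_of_fromPerm_le hσG hx) (.cons hux'.symm .nil)), ?_, ?_⟩
  · simp only [Walk.cons_isCycle_iff, Walk.cons_isPath_iff, Walk.isPath_iff_nil,
      Walk.support_cons, Walk.support_nil, Walk.edges_cons, Walk.edges_nil, List.mem_cons,
      List.not_mem_nil, Sym2.eq_iff]
    grind [σ.injective, Adj.ne]
  · intro v hv w w' hww' hw hw'
    simp only [mem_support_fromPerm, fromPerm_adj, Walk.toSubgraph, Subgraph.sup_adj,
      subgraphOfAdj_adj, singletonSubgraph_adj, Pi.bot_apply, Prop.bot_eq_false, or_false,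
      Sym2.eq_iff] at hv hw hw' ⊢
    grind [σ.injective, Adj.ne]

lemma exists_isAlternatingCycle_of_fixed_adj_apply (hσG : fromPerm σ ≤ G) (hu : σ u = u)
    {x r : V} (hx : σ x ≠ x) (hr : σ r = r) (hux : G.Adj u x) (hur : G.Adj u r)
    (hrx : G.Adj r (σ x)) :
    ∃ c : G.Walk u u, c.IsAlternatingCycle (fromPerm σ) := by
  refine ⟨.cons hux (.cons (adj_apply_of_fromPerm_le hσG hx)
    (.cons hrx.symm (.cons hur.symm .nil))), ?_, ?_⟩
  · simp only [Walk.cons_isCycle_iff, Walk.cons_isPath_iff, Walk.isPath_iff_nil,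
      Walk.support_cons, Walk.support_nil, Walk.edges_cons, Walk.edges_nil, List.mem_cons,
      List.not_mem_nil, Sym2.eq_iff]
    grind [σ.injective, Adj.ne]
  · intro v hv w w' hww' hw hw'
    simp only [mem_support_fromPerm, fromPerm_adj, Walk.toSubgraph, Subgraph.sup_adj,
      subgraphOfAdj_adj, singletonSubgraph_adj, Pi.bot_apply, Prop.bot_eq_false, or_false,
      Sym2.eq_iff] at hv hw hw' ⊢
    grind [σ.injective, Adj.ne]

lemma exists_isAlternatingCycle_of_apply_adj_apply (hσG : fromPerm σ ≤ G) (hu : σ u = u)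
    {x y : V} (hx : σ x ≠ x) (hy : σ y ≠ y) (hux : G.Adj u x) (huy : G.Adj u y)
    (hxy : G.Adj (σ x) (σ y)) (hxy' : σ x ≠ y) (hyx' : σ y ≠ x) :
    ∃ c : G.Walk u u, c.IsAlternatingCycle (fromPerm σ) := by
  refine ⟨.cons hux (.cons (adj_apply_of_fromPerm_le hσG hx) (.cons hxy
    (.cons (adj_apply_of_fromPerm_le hσG hy).symm (.cons huy.symm .nil)))), ?_, ?_⟩
  · simp only [Walk.cons_isCycle_iff, Walk.cons_isPath_iff, Walk.isPath_iff_nil,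
      Walk.support_cons, Walk.support_nil, Walk.edges_cons, Walk.edges_nil, List.mem_cons,
      List.not_mem_nil, Sym2.eq_iff]
    grind [σ.injective, Adj.ne]
  · intro v hv w w' hww' hw hw'
    simp only [mem_support_fromPerm, fromPerm_adj, Walk.toSubgraph, Subgraph.sup_adj,
      subgraphOfAdj_adj, singletonSubgraph_adj, Pi.bot_apply, Prop.bot_eq_false, or_false,
      Sym2.eq_iff] at hv hw hw' ⊢
    grind (splits := 40) [σ.injective, Adj.ne]

theorem indepSet_image_neighborSet (hσG : fromPerm σ ≤ G) (hu : σ u = u)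
    (hmax : ∀ c : G.Walk u u, ¬c.IsAlternatingCycle (fromPerm σ)) :
    IndepSet G (σ '' G.neighborSet u) := by
  rintro _ ⟨p, hp : G.Adj u p, rfl⟩ _ ⟨q, hq : G.Adj u q, rfl⟩ - hadj
  by_cases hp' : σ p = p <;> by_cases hq' : σ q = q
  · rw [hp', hq'] at hadj
    exact (exists_isAlternatingCycle_of_fixed_triangle hu hp' hq' hp hq hadj).elim hmax
  · rw [hp'] at hadj
    exact (exists_isAlternatingCycle_of_fixed_adj_apply hσG hu hq' hp' hq hp hadj).elim hmax
  · rw [hq'] at hadj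
    exact
      (exists_isAlternatingCycle_of_fixed_adj_apply hσG hu hp' hq' hp hq hadj.symm).elim hmax
  by_cases hpq : σ p = q
  · exact (exists_isAlternatingCycle_of_adj_apply hσG hu hp' hp (hpq ▸ hq)).elim hmax
  by_cases hqp : σ q = p
  · exact (exists_isAlternatingCycle_of_adj_apply hσG hu hq' hq (hqp ▸ hp)).elim hmax
  exact
    (exists_isAlternatingCycle_of_apply_adj_apply hσG hu hp' hq' hp hq hadj hpq hqp).elim hmax

end AlternatingCycles

end SimpleGraph

/-- Every finite graph with `δ(G) ≥ α(G) + 1` has a 2-factor. -/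
theorem two_factor_of_minDeg_ge_indepNum_succ {V : Type*} [Fintype V] (G : SimpleGraph V)
    (h : indNum G + 1 ≤ minDeg G) :
    ∃ H : SimpleGraph V, IsTwoFactor G H := by
  obtain ⟨H, ⟨hHG, hH⟩, hmax⟩ :=
    Set.exists_max_image {H : SimpleGraph V | H ≤ G ∧ H.IsCycles} (fun H => H.support.ncard)
      (Set.toFinite _) ⟨⊥, bot_le, fun v hv => by simp at hv⟩
  by_cases hcov : ∀ v, v ∈ H.support
  · exact ⟨H, hHG, fun v => (degN_eq_ncard H v).trans (hH (hcov v))⟩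
  push Not at hcov
  obtain ⟨u, hu⟩ := hcov
  obtain ⟨σ, rfl⟩ := hH.exists_fromPerm_eq
  have hS : IndepSet G (σ '' G.neighborSet u) := by
    refine SimpleGraph.indepSet_image_neighborSet hHG (by simpa using hu) fun c hc => ?_
    obtain ⟨H', hH'G, hH', hsub⟩ := SimpleGraph.exists_isCycles_insert_support_subset hHG hH hc
    have hlt := Set.ncard_lt_ncard ((Set.ssubset_insert hu).trans_subset hsub)
    have hle := hmax H' ⟨hH'G, hH'⟩
    omega
  have hcard := hS.ncard_le_indNum
  rw [Set.ncard_image_of_injective _ σ.injective, ← degN_eq_ncard] at hcard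
  have := minDeg_le_degN G u
  omega
end

section
/- Every finite forest G has a pseudo 2-factor with exactly α(G) connected components, where α(G) is the independence number of G. -/
/-!
For a forest the independence number and the matching number add up to the number of
vertices. This is proved by peeling leaves: if `u` is a leaf with neighbour `v`, deleting the
edges at `v` raises `α` by exactly one (a maximum independent set may be assumed to contain `u`
rather than `v`), and a matching of the smaller forest extends by the edge `uv`. A matching `M`,
viewed as a spanning subgraph, is a pseudo 2-factor whose components are `K₁`s and `K₂`s, and it
has `|V| - |M| = α` components.
-/

variable {V : Type*}

open Finset

namespace SimpleGraph

variable {G M : SimpleGraph V}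

theorem IsAcyclic.exists_neighborSet_eq_singleton [Finite G.edgeSet] (hG : G.IsAcyclic)
    (hne : G ≠ ⊥) : ∃ u v, G.neighborSet u = {v} := by
  obtain ⟨a, b, hab⟩ := ne_bot_iff_exists_adj.1 hne
  have : Nonempty V := ⟨a⟩
  obtain ⟨u, v, p, hp, hmax⟩ := Walk.exists_isPath_forall_isPath_length_le_length G
  have hnil : ¬p.Nil := fun hnil => by
    simpa [Walk.length_eq_zero_iff.2 hnil] using hmax a b _ (Path.singleton hab).isPath
  refine ⟨u, p.snd, Set.eq_singleton_iff_unique_mem.2 ⟨p.adj_snd hnil, fun w huw => ?_⟩⟩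
  refine hG.eq_snd_of_adj_start hp huw (not_not.1 fun hw => ?_)
  simpa using hmax w v _ (hp.cons hw (h := huw.symm))

theorem indepNum_bot [Finite V] : (⊥ : SimpleGraph V).indepNum = Nat.card V := by
  classical
  cases nonempty_fintype V
  obtain ⟨s, hs⟩ := (⊥ : SimpleGraph V).exists_isNIndepSet_indepNum
  refine le_antisymm ?_ ?_
  · simpa [← hs.card_eq] using s.card_le_univ
  · simpa using IsIndepSet.card_le_indepNum (G := ⊥) (t := univ) fun _ _ _ _ _ h => h

theorem indepNum_deleteIncidenceSet_of_neighborSet_eq_singleton [Finite V] {u v : V}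
    (hu : G.neighborSet u = {v}) : (G.deleteIncidenceSet v).indepNum = G.indepNum + 1 := by
  classical
  have hleaf : ∀ w, G.Adj u w ↔ w = v := fun w => Set.ext_iff.1 hu w
  refine le_antisymm ?_ ?_
  · obtain ⟨I, hI⟩ := (G.deleteIncidenceSet v).exists_isNIndepSet_indepNum
    have hJ : G.IsIndepSet ↑(insert u (I.erase v)) := by
      intro x hx y hy hxy hadj
      simp only [coe_insert, coe_erase, Set.mem_insert_iff, Set.mem_sdiff, mem_coe,
        Set.mem_singleton_iff] at hx hy
      rcases hx with rfl | ⟨hxI, hxv⟩ <;> rcases hy with rfl | ⟨hyI, hyv⟩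
      · exact hxy rfl
      · exact hyv ((hleaf y).1 hadj)
      · exact hxv ((hleaf x).1 hadj.symm)
      · exact hI.isIndepSet hxI hyI hxy (deleteIncidenceSet_adj.2 ⟨hadj, hxv, hyv⟩)
    have := hJ.card_le_indepNum
    have := pred_card_le_card_erase (s := I) (a := v)
    have := card_le_card (subset_insert u (I.erase v))
    have := hI.card_eq
    omega
  · obtain ⟨I, hI⟩ := G.exists_isNIndepSet_indepNum
    have hJ : (G.deleteIncidenceSet v).IsIndepSet ↑(insert u (insert v I)) := by
      intro x hx y hy hxy hadj
      rw [deleteIncidenceSet_adj] at hadj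
      simp only [coe_insert, Set.mem_insert_iff, mem_coe] at hx hy
      rcases hx with rfl | rfl | hxI
      · exact hadj.2.2 ((hleaf y).1 hadj.1)
      · exact hadj.2.1 rfl
      rcases hy with rfl | rfl | hyI
      · exact hadj.2.1 ((hleaf x).1 hadj.1.symm)
      · exact hadj.2.2 rfl
      · exact hI.isIndepSet hxI hyI hxy hadj.1
    have hcard : #I + 1 ≤ #(insert u (insert v I)) := by
      have huv : G.Adj u v := (hleaf v).2 rfl
      by_cases huI : u ∈ I
      · have hvI : v ∉ I := fun hvI => hI.isIndepSet huI hvI huv.ne huv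
        calc #I + 1 = #(insert v I) := (card_insert_of_notMem hvI).symm
          _ ≤ _ := card_le_card (subset_insert _ _)
      · calc #I + 1 = #(insert u I) := (card_insert_of_notMem huI).symm
          _ ≤ _ := card_le_card (insert_subset_insert _ (subset_insert _ _))
    exact hI.card_eq ▸ hcard.trans hJ.card_le_indepNum

theorem Walk.eq_or_adj_of_subsingleton_neighborSet (hM : ∀ v, (M.neighborSet v).Subsingleton)
    {x y : V} (p : M.Walk x y) : x = y ∨ M.Adj x y := by
  induction p with
  | nil => exact .inl rfl
  | cons hxz _ ih =>
    rcases ih with rfl | hzy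
    · exact .inr hxz
    · exact .inl (hM _ hxz.symm hzy)

theorem card_connectedComponent_add_ncard_edgeSet_of_subsingleton_neighborSet [Finite V]
    (hM : ∀ v, (M.neighborSet v).Subsingleton) :
    Nat.card M.ConnectedComponent + M.edgeSet.ncard = Nat.card V := by
  classical
  cases nonempty_fintype V
  have hdeg : ∀ v w, M.Adj v w → M.degree w = 1 := fun v w hvw => by
    rw [← card_neighborSet_eq_degree, ← Nat.card_eq_fintype_card,
      (hM w).eq_singleton_of_mem hvw.symm, Nat.card_unique]
  let fiber (c : M.ConnectedComponent) : Finset V := {v | M.connectedComponentMk v = c}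
  -- A component is a vertex together with its at most one neighbour.
  have hfiber (c : M.ConnectedComponent) : 2 * #(fiber c) = 2 + ∑ v ∈ fiber c, M.degree v := by
    induction c using ConnectedComponent.ind with | h r => ?_
    have : fiber (M.connectedComponentMk r) = insert r (M.neighborFinset r) := by
      ext v
      simp only [fiber, mem_filter, mem_univ, true_and, ConnectedComponent.eq, mem_insert,
        mem_neighborFinset]
      exact ⟨fun ⟨p⟩ => (p.eq_or_adj_of_subsingleton_neighborSet hM).imp id Adj.symm,
        by rintro (rfl | h); exacts [Reachable.rfl, h.symm.reachable]⟩
    rw [this, card_insert_of_notMem (by simp), sum_insert (by simp),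
      sum_congr rfl fun w hw => hdeg r w ((mem_neighborFinset _ _ _).1 hw), sum_const,
      card_neighborFinset_eq_degree, smul_eq_mul, mul_one]
    ring
  have hV : Nat.card V = ∑ c, #(fiber c) := by
    rw [Nat.card_eq_fintype_card, ← card_univ]
    exact card_eq_sum_card_fiberwise fun v _ => mem_univ _
  have hE : 2 * M.edgeSet.ncard = ∑ c, ∑ v ∈ fiber c, M.degree v := by
    rw [← coe_edgeFinset, Set.ncard_coe_finset, ← sum_degrees_eq_twice_card_edges]
    exact (sum_fiberwise _ _ _).symm
  have : 2 * Nat.card V = 2 * Nat.card M.ConnectedComponent + 2 * M.edgeSet.ncard := by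
    rw [hV, mul_sum, sum_congr rfl fun c _ => hfiber c, sum_add_distrib, hE, sum_const,
      card_univ, Nat.card_eq_fintype_card, smul_eq_mul, mul_comm]
  omega

theorem subsingleton_neighborSet_sup_edge (hM : ∀ x, (M.neighborSet x).Subsingleton) {u v : V}
    (hu : ∀ w, ¬M.Adj u w) (hv : ∀ w, ¬M.Adj v w) (x : V) :
    ((M ⊔ edge u v).neighborSet x).Subsingleton := by
  intro y hy z hz
  simp only [mem_neighborSet, sup_adj, edge_adj] at hy hz
  rcases hy with hy | hy <;> rcases hz with hz | hz
  · exact hM x hy hz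
  all_goals grind

theorem ncard_edgeSet_sup_edge [Finite M.edgeSet] {u v : V} (huv : u ≠ v) (h : ¬M.Adj u v) :
    (M ⊔ edge u v).edgeSet.ncard = M.edgeSet.ncard + 1 := by
  rw [edgeSet_sup, edgeSet_edge_of_ne huv, Set.union_singleton,
    Set.ncard_insert_of_notMem (show s(u, v) ∉ M.edgeSet from h)]

theorem IsAcyclic.exists_matching_indepNum_add_ncard_edgeSet [Finite V] (hG : G.IsAcyclic) :
    ∃ M ≤ G, (∀ v, (M.neighborSet v).Subsingleton) ∧
      G.indepNum + M.edgeSet.ncard = Nat.card V := by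
  induction G using WellFoundedLT.induction with | ind G ih => ?_
  rcases eq_or_ne G ⊥ with rfl | hne
  · exact ⟨⊥, le_rfl, by simp, by simp [indepNum_bot]⟩
  obtain ⟨u, v, hu⟩ := hG.exists_neighborSet_eq_singleton hne
  have hleaf : ∀ w, G.Adj u w ↔ w = v := fun w => Set.ext_iff.1 hu w
  have huv : G.Adj u v := (hleaf v).2 rfl
  have hlt : G.deleteIncidenceSet v < G := by
    refine lt_of_le_of_ne (deleteIncidenceSet_le G v) fun h => ?_
    exact (deleteIncidenceSet_adj.1 (h ▸ huv)).2.2 rfl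
  obtain ⟨M, hMG, hM, hcount⟩ := ih _ hlt (hG.anti hlt.le)
  have hMu : ∀ w, ¬M.Adj u w := fun w h => by
    have := deleteIncidenceSet_adj.1 (hMG h)
    exact this.2.2 ((hleaf w).1 this.1)
  have hMv : ∀ w, ¬M.Adj v w := fun w h => (deleteIncidenceSet_adj.1 (hMG h)).2.1 rfl
  refine ⟨M ⊔ edge u v, sup_le (hMG.trans hlt.le) ((edge_le_iff G).2 (.inr huv)),
    subsingleton_neighborSet_sup_edge hM hMu hMv, ?_⟩
  rw [indepNum_deleteIncidenceSet_of_neighborSet_eq_singleton hu] at hcount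
  rw [ncard_edgeSet_sup_edge huv.ne (hMu v)]
  omega

end SimpleGraph

theorem indNum_eq_indepNum (G : SimpleGraph V) : indNum G = G.indepNum := by
  unfold indNum SimpleGraph.indepNum
  congr 1
  ext n
  exact ⟨fun ⟨I, hI, hn⟩ => ⟨I, hI, hn⟩, fun ⟨I, hI, hn⟩ => ⟨I, hI, hn⟩⟩

theorem isPseudoTwoFactor_of_subsingleton_neighborSet {G M : SimpleGraph V} (hMG : M ≤ G)
    (hM : ∀ v, (M.neighborSet v).Subsingleton) : IsPseudoTwoFactor G M := by
  have hdeg : ∀ {u v}, M.Adj u v → degN M u = 1 := fun huv => by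
    rw [degN, (hM _).eq_singleton_of_mem huv, Nat.card_unique]
  refine ⟨hMG, fun v => ?_, fun u v huv => by rw [hdeg huv, hdeg huv.symm]⟩
  have := (hM v).coe_sort
  exact (Finite.card_le_one_iff_subsingleton.2 this).trans one_le_two

/-- Every finite forest `G` has a pseudo 2-factor with exactly `α(G)` components;
in particular it has a pseudo 2-factor with at most `f(G)` components. -/
theorem forest_pseudo_two_factor_alpha_components {V : Type*} [Fintype V] (G : SimpleGraph V)
    (hG : G.IsAcyclic) :
    ∃ H : SimpleGraph V, IsPseudoTwoFactor G H ∧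
      Nat.card H.ConnectedComponent = indNum G := by
  obtain ⟨M, hMG, hM, hcount⟩ := hG.exists_matching_indepNum_add_ncard_edgeSet
  refine ⟨M, isPseudoTwoFactor_of_subsingleton_neighborSet hMG hM, ?_⟩
  have := SimpleGraph.card_connectedComponent_add_ncard_edgeSet_of_subsingleton_neighborSet hM
  rw [indNum_eq_indepNum]
  omega
end

section
/- Let H be a finite simple graph with at least one vertex and let p ≥ |V(H)| + 1 be an integer. Let G_1 be the graph obtained from the disjoint union of H and p disjoint copies of K_2 by adding all edges between V(H) and the vertices of the copies of K_2. Then every pseudo 2-factor of G_1 has at least p − |V(H)| non-cycle components. -/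
variable {V : Type*}

/-- The graph obtained by joining `H` with `p` disjoint copies of `K₂`
(on vertex set `Fin p × Fin 2`, copy `i` consisting of `(i,0)` and `(i,1)`). -/
def joinK2 (V : Type*) (H : SimpleGraph V) (p : ℕ) : SimpleGraph (V ⊕ Fin p × Fin 2) where
  Adj x y :=
    match x, y with
    | Sum.inl a, Sum.inl b => H.Adj a b
    | Sum.inl _, Sum.inr _ => True
    | Sum.inr _, Sum.inl _ => True
    | Sum.inr a, Sum.inr b => a.1 = b.1 ∧ a.2 ≠ b.2
  symm := by
    constructor
    rintro (a | a) (b | b) h <;> simp_all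
    · exact h.symm
    · exact fun hba => h.2 hba.symm
  loopless := by
    constructor
    rintro (a | a) h <;> simp_all

/-!
Call a copy of `K₂` low-degree if one of its vertices has degree at most `1` in the pseudo
2-factor `F`. Since `F`-degrees are constant on components, such a vertex lies in a component `K₁`
or `K₂`; its only possible neighbour outside `V(H)` is its twin, so distinct low-degree copies meet
distinct non-cycle components. In every other copy both vertices have `F`-degree `2` but only one
neighbour outside `V(H)`, so each has an `F`-neighbour in `V(H)`; as vertices of `H` have
`F`-degree at most `2`, double counting gives `2 (p - #low-degree copies) ≤ 2 |V(H)|`.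
-/

open Finset

lemma degN_eq_degree {W : Type*} [Fintype W] (F : SimpleGraph W) [DecidableRel F.Adj] (v : W) :
    degN F v = F.degree v := by
  simp [degN, Nat.card_eq_fintype_card, ← SimpleGraph.card_neighborSet_eq_degree]

namespace SimpleGraph

variable {W : Type*} [Fintype W] {F : SimpleGraph W} [DecidableRel F.Adj]

lemma eq_of_adj_of_adj_of_degree_le_one {w u v : W} (hw : F.degree w ≤ 1) (hu : F.Adj w u)
    (hv : F.Adj w v) : u = v :=
  Finset.card_le_one.1 hw u ((F.mem_neighborFinset w u).2 hu) v ((F.mem_neighborFinset w v).2 hv)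

lemma Reachable.eq_or_adj_of_degree_le_one
    (hconst : ∀ u v, F.Adj u v → F.degree u = F.degree v) {u v : W} (h : F.Reachable u v)
    (hu : F.degree u ≤ 1) : u = v ∨ F.Adj u v := by
  obtain ⟨w⟩ := h
  induction w with
  | nil => exact .inl rfl
  | cons hadj _ ih =>
    have hw : _ ≤ 1 := hconst _ _ hadj ▸ hu
    rcases ih hw with rfl | hadj'
    · exact .inr hadj
    · exact .inl (eq_of_adj_of_adj_of_degree_le_one hw hadj.symm hadj')

lemma card_le_nonCycleCount (hconst : ∀ u v, F.Adj u v → F.degree u = F.degree v)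
    {ι : Type*} (f : ι → W) (hf : ∀ i, F.degree (f i) ≤ 1)
    (hsep : ∀ i j, f i = f j ∨ F.Adj (f i) (f j) → i = j) :
    Nat.card ι ≤ nonCycleCount F := by
  refine Nat.card_le_card_of_injective
    (fun i => ⟨F.connectedComponentMk (f i), f i, rfl, (degN_eq_degree F (f i)).trans_le (hf i)⟩)
    fun i j hij => hsep i j ?_
  exact (ConnectedComponent.eq.1 (congrArg Subtype.val hij)).eq_or_adj_of_degree_le_one
    hconst (hf i)

lemma card_le_mul_card_of_forall_exists_adj (s t : Finset W) (n : ℕ)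
    (hdeg : ∀ v ∈ t, F.degree v ≤ n) (hadj : ∀ x ∈ s, ∃ v ∈ t, F.Adj x v) :
    #s ≤ #t * n := by
  have key := card_mul_le_card_mul F.Adj (m := 1)
    (fun x hx => by
      obtain ⟨v, hv, hxv⟩ := hadj x hx
      exact card_pos.2 ⟨v, mem_filter.2 ⟨hv, hxv⟩⟩)
    (fun v hv => (card_le_card fun x hx => (F.mem_neighborFinset v x).2
      (mem_filter.1 hx).2.symm).trans (hdeg v hv))
  simpa using key

end SimpleGraph

open SimpleGraph

section joinK2

variable {V : Type*} {H : SimpleGraph V} {p : ℕ}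

lemma eq_of_joinK2_adj_inr_of_adj_inr {x y z : Fin p × Fin 2}
    (hy : (joinK2 V H p).Adj (.inr x) (.inr y)) (hz : (joinK2 V H p).Adj (.inr x) (.inr z)) :
    y = z := by
  obtain ⟨hy₁, hy₂⟩ := hy
  obtain ⟨hz₁, hz₂⟩ := hz
  exact Prod.ext (hy₁.symm.trans hz₁) (by omega)

variable [Fintype V] {F : SimpleGraph (V ⊕ Fin p × Fin 2)} [DecidableRel F.Adj]

lemma exists_adj_inl_of_one_lt_degree (hle : F ≤ joinK2 V H p) {x : Fin p × Fin 2}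
    (hx : 1 < F.degree (.inr x)) : ∃ v, F.Adj (.inr x) (.inl v) := by
  by_contra! h
  refine hx.not_ge (card_le_one.2 fun a ha b hb => ?_)
  rw [mem_neighborFinset] at ha hb
  rcases a with a | a
  · exact absurd ha (h a)
  rcases b with b | b
  · exact absurd hb (h b)
  rw [eq_of_joinK2_adj_inr_of_adj_inr (hle ha) (hle hb)]

variable (F) in
def lowDegreeCopies : Finset (Fin p) := {i | ∃ a, F.degree (.inr (i, a)) ≤ 1}

@[simp]
lemma mem_lowDegreeCopies {i : Fin p} :
    i ∈ lowDegreeCopies F ↔ ∃ a, F.degree (.inr (i, a)) ≤ 1 := by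
  simp [lowDegreeCopies]

lemma card_lowDegreeCopies_le_nonCycleCount (hle : F ≤ joinK2 V H p)
    (hconst : ∀ u v, F.Adj u v → F.degree u = F.degree v) :
    #(lowDegreeCopies F) ≤ nonCycleCount F := by
  have hlow (i : lowDegreeCopies F) : ∃ a, F.degree (.inr (i.1, a)) ≤ 1 :=
    mem_lowDegreeCopies.1 i.2
  choose a ha using hlow
  rw [← Fintype.card_coe, ← Nat.card_eq_fintype_card]
  refine card_le_nonCycleCount hconst (fun i => .inr (i.1, a i)) ha fun i j h => Subtype.ext ?_
  rcases h with h | h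
  · exact congrArg Prod.fst (Sum.inr_injective h)
  · exact (hle h).1

lemma sub_card_le_card_lowDegreeCopies (hle : F ≤ joinK2 V H p) (hdeg : ∀ v, F.degree v ≤ 2) :
    p - Fintype.card V ≤ #(lowDegreeCopies F) := by
  have hgood : ∀ y ∈ ((univ \ lowDegreeCopies F) ×ˢ univ).map .inr,
      ∃ v ∈ univ.map .inl, F.Adj y v := by
    intro _ hy
    obtain ⟨x, hx, rfl⟩ := mem_map.1 hy
    have hx : x.1 ∉ lowDegreeCopies F := (mem_sdiff.1 (mem_product.1 hx).1).2
    have hdeg_x : 1 < F.degree (.inr x) :=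
      not_le.1 fun h => hx (mem_lowDegreeCopies.2 ⟨x.2, h⟩)
    obtain ⟨v, hv⟩ := exists_adj_inl_of_one_lt_degree hle hdeg_x
    exact ⟨.inl v, mem_map_of_mem _ (mem_univ v), hv⟩
  have hcount := card_le_mul_card_of_forall_exists_adj _ _ 2 (fun v _ => hdeg v) hgood
  simp only [card_map, card_product, card_sdiff_of_subset (subset_univ _), card_univ,
    Fintype.card_fin] at hcount
  omega

end joinK2

theorem joinK2_pseudo_two_factor_lower_bound_general {V : Type*} [Fintype V]
    (H : SimpleGraph V) (p : ℕ)
    (F : SimpleGraph (V ⊕ Fin p × Fin 2)) (hF : IsPseudoTwoFactor (joinK2 V H p) F) :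
    p - Fintype.card V ≤ nonCycleCount F := by
  classical
  obtain ⟨hle, hdeg, hconst⟩ := hF
  simp only [degN_eq_degree] at hdeg hconst
  exact (sub_card_le_card_lowDegreeCopies hle hdeg).trans
    (card_lowDegreeCopies_le_nonCycleCount hle hconst)

/-- For `H` with at least one vertex and `p ≥ |V(H)| + 1`, every pseudo 2-factor of
the join `G₁` of `H` with `p` disjoint copies of `K₂` has at least `p - |V(H)|`
non-cycle components. -/
theorem joinK2_pseudo_two_factor_lower_bound {V : Type*} [Fintype V] [Nonempty V]
    (H : SimpleGraph V) (p : ℕ) (hp : Fintype.card V + 1 ≤ p)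
    (F : SimpleGraph (V ⊕ Fin p × Fin 2)) (hF : IsPseudoTwoFactor (joinK2 V H p) F) :
    p - Fintype.card V ≤ nonCycleCount F :=
  joinK2_pseudo_two_factor_lower_bound_general H p F hF
end

section
/- For every positive integer k there exists a finite simple graph G with α(G) − δ(G) + 1 = k + 1 and f(G) = 2, where f(G) is the maximum of |I| − δ_G(I) + 1 over all nonempty independent sets I of G. Hence the gap between α(G) − δ(G) + 1 and f(G) can be arbitrarily large. -/
variable {V : Type*}

/-!
The witness for `k` has vertex set `A ⊔ B ⊔ C ⊔ {u}` with `|A| = |B| = k` independent, `C` a clique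
on `2k - 1` vertices joined completely to `A ∪ B`, and `u` joined to `A` only. Then `α = 2k`
(attained by `A ∪ B`) and `δ = k` (attained by `u`). An independent set meeting `C` lies in `{c, u}`;
one containing `u` avoids `A`, so has at most `k + 1 = deg u + 1` vertices; every independent set has
at most `2k ≤ deg v + 1` vertices for `v ∈ A ∪ B`. Hence `|I| ≤ δ_G(I) + 1` always, with equality
for `I = A ∪ B`, so `f = 2`.
-/

open Finset

lemma card_le_minDegOn_add_one {G : SimpleGraph V} {I : Finset V} (hI : I.Nonempty)
    (h : ∀ v ∈ I, #I ≤ degN G v + 1) : #I ≤ minDegOn G I + 1 := by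
  obtain ⟨v, hv, hmin⟩ := Nat.sInf_mem (hI.to_set.image (degN G))
  rw [minDegOn, ← hmin]
  exact h v hv

section GapGraph

variable {α β γ : Type*}

/-- Vertices `inl (inl a)`, `inl (inr b)`, `inr (some c)` and `inr none` form the parts `A`, `B`,
the clique `C` and the vertex `u`. -/
def gapRel : (α ⊕ β) ⊕ Option γ → (α ⊕ β) ⊕ Option γ → Prop
  | .inl _, .inr (some _) => True
  | .inl (.inl _), .inr none => True
  | .inr (some _), .inr (some _) => True
  | _, _ => False

def gapGraph (α β γ : Type*) : SimpleGraph ((α ⊕ β) ⊕ Option γ) :=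
  SimpleGraph.fromRel gapRel

namespace gapGraph

lemma neighborSet_inl_inl (a : α) :
    (gapGraph α β γ).neighborSet (.inl (.inl a)) = Set.range .inr := by
  ext (_ | (_ | _)) <;> simp [gapGraph, gapRel]

lemma neighborSet_inl_inr (b : β) :
    (gapGraph α β γ).neighborSet (.inl (.inr b)) = Set.range (.inr ∘ some) := by
  ext (_ | (_ | _)) <;> simp [gapGraph, gapRel]

lemma neighborSet_inr_none :
    (gapGraph α β γ).neighborSet (.inr none) = Set.range (.inl ∘ .inl) := by
  ext ((_ | _) | _) <;> simp [gapGraph, gapRel]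

lemma range_inl_inl_subset_neighborSet_inr_some (c : γ) :
    Set.range (.inl ∘ .inl) ⊆ (gapGraph α β γ).neighborSet (.inr (some c)) := by
  rintro _ ⟨a, rfl⟩
  simp [gapGraph, gapRel]

lemma degN_inl_inl [Fintype γ] (a : α) :
    degN (gapGraph α β γ) (.inl (.inl a)) = Fintype.card γ + 1 := by
  rw [degN, neighborSet_inl_inl, Nat.card_range_of_injective Sum.inr_injective,
    Nat.card_eq_fintype_card, Fintype.card_option]

lemma degN_inl_inr [Fintype γ] (b : β) :
    degN (gapGraph α β γ) (.inl (.inr b)) = Fintype.card γ := by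
  rw [degN, neighborSet_inl_inr,
    Nat.card_range_of_injective (Sum.inr_injective.comp (Option.some_injective γ)),
    Nat.card_eq_fintype_card]

lemma degN_inr_none [Fintype α] : degN (gapGraph α β γ) (.inr none) = Fintype.card α := by
  rw [degN, neighborSet_inr_none,
    Nat.card_range_of_injective (Sum.inl_injective.comp Sum.inl_injective),
    Nat.card_eq_fintype_card]

lemma card_le_degN_inr_some [Fintype α] [Finite β] [Finite γ] (c : γ) :
    Fintype.card α ≤ degN (gapGraph α β γ) (.inr (some c)) := by
  rw [degN, ← Nat.card_eq_fintype_card,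
    ← Nat.card_range_of_injective (Sum.inl_injective.comp Sum.inl_injective)]
  exact Nat.card_mono (Set.toFinite _) (range_inl_inl_subset_neighborSet_inr_some c)

lemma indepSet_range_inl : IndepSet (gapGraph α β γ) (Set.range Sum.inl) := by
  rintro _ ⟨_ | _, rfl⟩ _ ⟨_ | _, rfl⟩ _ <;> simp [gapGraph, gapRel]

lemma minDegOn_range_inl [Fintype γ] [Nonempty β] :
    minDegOn (gapGraph α β γ) (Set.range Sum.inl) = Fintype.card γ := by
  refine IsLeast.csInf_eq ⟨⟨.inl (.inr (Classical.arbitrary β)), by simp, degN_inl_inr _⟩, ?_⟩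
  rintro _ ⟨_, ⟨a | b, rfl⟩, rfl⟩
  · simp [degN_inl_inl]
  · simp [degN_inl_inr]

variable {I : Finset ((α ⊕ β) ⊕ Option γ)}

lemma card_le_two_of_inr_some_mem (hI : IndepSet (gapGraph α β γ) I) {c : γ}
    (hc : .inr (some c) ∈ I) : #I ≤ 2 := by
  classical
  have hsub : I ⊆ {.inr (some c), .inr none} := by
    intro x hx
    rcases eq_or_ne x (.inr (some c)) with rfl | hne
    · simp
    have := hI hx hc hne
    rcases x with _ | _ | c'
    · simp_all [gapGraph, gapRel]
    · simp
    · simp_all [gapGraph, gapRel]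
  exact (card_le_card hsub).trans card_le_two

lemma card_le_of_inr_none_mem [Fintype β] (hI : IndepSet (gapGraph α β γ) I)
    (hu : .inr none ∈ I) (hC : ∀ c, .inr (some c) ∉ I) : #I ≤ Fintype.card β + 1 := by
  classical
  have hsub : I ⊆ insert (.inr none) (univ.image (.inl ∘ .inr)) := by
    intro x hx
    rcases x with (a | b) | _ | c
    · exact absurd (hI hx hu (by simp)) (by simp [gapGraph, gapRel])
    · simp
    · simp
    · exact absurd hx (hC c)
  calc #I ≤ #(univ.image (Sum.inl ∘ Sum.inr : β → (α ⊕ β) ⊕ Option γ)) + 1 :=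
        (card_le_card hsub).trans (card_insert_le _ _)
    _ ≤ Fintype.card β + 1 := by gcongr; exact card_image_le

lemma card_le_of_forall_inr_notMem [Fintype α] [Fintype β] (h : ∀ w, .inr w ∉ I) :
    #I ≤ Fintype.card α + Fintype.card β := by
  refine (card_le_card (s := I) (t := univ.map .inl) fun x hx => ?_).trans (by simp)
  rcases x with m | w
  · simp
  · exact absurd hx (h w)

end gapGraph

end GapGraph

abbrev gapExample (k : ℕ) : SimpleGraph ((Fin k ⊕ Fin k) ⊕ Option (Fin (2 * k - 1))) :=
  gapGraph (Fin k) (Fin k) (Fin (2 * k - 1))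

namespace gapExample

open gapGraph

variable {k : ℕ} {I : Finset ((Fin k ⊕ Fin k) ⊕ Option (Fin (2 * k - 1)))}

lemma card_le_of_inr_none_mem (hk : 1 ≤ k) (hI : IndepSet (gapExample k) I)
    (hu : .inr none ∈ I) : #I ≤ k + 1 := by
  by_cases hC : ∃ c, .inr (some c) ∈ I
  · obtain ⟨c, hc⟩ := hC
    have := card_le_two_of_inr_some_mem hI hc
    omega
  · simpa using gapGraph.card_le_of_inr_none_mem hI hu (not_exists.mp hC)

lemma card_le (hk : 1 ≤ k) (hI : IndepSet (gapExample k) I) : #I ≤ 2 * k := by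
  by_cases hC : ∃ c, .inr (some c) ∈ I
  · obtain ⟨c, hc⟩ := hC
    have := card_le_two_of_inr_some_mem hI hc
    omega
  by_cases hu : .inr none ∈ I
  · have := card_le_of_inr_none_mem hk hI hu
    omega
  have := card_le_of_forall_inr_notMem (I := I) (by rintro (_ | c) <;> simp_all)
  simp only [Fintype.card_fin] at this
  omega

lemma card_le_degN_add_one (hk : 1 ≤ k) (hI : IndepSet (gapExample k) I) {v}
    (hv : v ∈ I) : #I ≤ degN (gapExample k) v + 1 := by
  have := card_le hk hI
  rcases v with (a | b) | _ | c
  · rw [degN_inl_inl, Fintype.card_fin]; omega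
  · rw [degN_inl_inr, Fintype.card_fin]; omega
  · rw [degN_inr_none, Fintype.card_fin]; exact card_le_of_inr_none_mem hk hI hv
  · have := card_le_two_of_inr_some_mem hI hv
    have : k ≤ degN (gapExample k) (.inr (some c)) := by
      simpa using card_le_degN_inr_some (α := Fin k) (β := Fin k) c
    omega

lemma minDeg_eq (hk : 1 ≤ k) : minDeg (gapExample k) = k := by
  refine IsLeast.csInf_eq ⟨⟨.inr none, by simp [degN_inr_none]⟩, ?_⟩
  rintro _ ⟨(a | b) | _ | c, rfl⟩
  · rw [degN_inl_inl, Fintype.card_fin]; omega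
  · rw [degN_inl_inr, Fintype.card_fin]; omega
  · simp [degN_inr_none]
  · simpa using card_le_degN_inr_some (α := Fin k) (β := Fin k) c

lemma indNum_eq (hk : 1 ≤ k) : indNum (gapExample k) = 2 * k := by
  refine IsGreatest.csSup_eq
    ⟨⟨univ.map .inl, by simpa using indepSet_range_inl, by simp [two_mul]⟩, ?_⟩
  rintro _ ⟨I, hI, rfl⟩
  exact card_le hk hI

lemma fVal_eq (hk : 1 ≤ k) : fVal (gapExample k) = 2 := by
  have : Nonempty (Fin k) := ⟨⟨0, hk⟩⟩
  refine IsGreatest.csSup_eq ⟨⟨univ.map .inl, by simp, by simpa using indepSet_range_inl, ?_⟩, ?_⟩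
  · simp only [card_map, card_univ, Fintype.card_sum, Fintype.card_fin, coe_map,
      Function.Embedding.inl_apply, coe_univ, Set.image_univ, minDegOn_range_inl]
    omega
  · rintro _ ⟨I, hne, hI, rfl⟩
    have := card_le_minDegOn_add_one hne fun v hv => card_le_degN_add_one hk hI hv
    omega

end gapExample

/-- For every positive integer `k` there is a finite graph `G` with
`α(G) - δ(G) + 1 = k + 1` and `f(G) = 2`: the gap between `f(G)` and
`α(G) - δ(G) + 1` can be arbitrarily large. -/
theorem exists_graph_large_gap (k : ℕ) (hk : 1 ≤ k) :
    ∃ (V : Type) (_ : Fintype V) (G : SimpleGraph V),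
      (indNum G : ℤ) - (minDeg G : ℤ) + 1 = (k : ℤ) + 1 ∧ fVal G = 2 := by
  refine ⟨_, inferInstance, gapExample k, ?_, gapExample.fVal_eq hk⟩
  rw [gapExample.indNum_eq hk, gapExample.minDeg_eq hk]
  omega
end
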